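/- Under the gaps-and-weight setup, assume that G_j is nonempty for every j = 1, …, n. Then the n × n real matrix M with entries M_{j,l} = I_j(t ↦ t^{l−1}) (j, l = 1, …, n) is invertible. Equivalently, the matrix of integrals of the basis of holomorphic differentials λ^{l−1} dλ / w over the collections of paths G_j is non-degenerate. -/

import Mathlib

/-!
If `M c = 0`, the polynomial `p(t) = ∑ₗ cₗ tˡ`, of degree `< n`, satisfies `I_j(p) = 0` for every
gap. On a gap `w` is positive, and it vanishes at the endpoints only like the square root of the
distance to them, so `p / w` is integrable there. Hence `p` cannot keep a constant sign on a gap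
(all the integrals in `I_j(p)` would then share that strict sign), so it has a zero in each of the
`n` disjoint gaps. A Vandermonde argument then gives `c = 0`.
-/

open Finset

/-- The weight `w(t) = √(−∏_{i=0}^{2n}(t − bᵢ))` on the gaps of the hyperelliptic curve. -/
noncomputable def gapWeight (n : ℕ) (b : Fin (2 * n + 1) → ℝ) (t : ℝ) : ℝ :=
  Real.sqrt (-∏ i, (t - b i))

/-- The signed integral `I_j(f) = ε_j · Σ_{(c,d) ∈ G_j} ∫_c^d f(t)/w(t) dt` over the pieces
of the collection of paths `G_j` lying in gap `j`. -/
noncomputable def gapIntegral (n : ℕ) (b : Fin (2 * n + 1) → ℝ) (ε : Fin n → ℝ)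
    (G : Fin n → List (ℝ × ℝ)) (j : Fin n) (f : ℝ → ℝ) : ℝ :=
  ε j * ((G j).map fun pr => ∫ t in pr.1..pr.2, f t / gapWeight n b t).sum

open MeasureTheory

theorem prod_sub_eq_neg_one_pow_mul_prod_abs {ι : Type*} [Fintype ι] (b : ι → ℝ) (t : ℝ) :
    ∏ k, (t - b k) = (-1) ^ #{k | t < b k} * ∏ k, |t - b k| := by
  have hfactor : ∀ k, t - b k = (if t < b k then -1 else 1) * |t - b k| := by
    intro k
    split_ifs with h
    · rw [abs_of_neg (sub_neg.mpr h)]; ring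
    · rw [abs_of_nonneg (sub_nonneg.mpr (not_lt.mp h)), one_mul]
  rw [prod_congr rfl fun k _ => hfactor k, prod_mul_distrib, prod_ite, prod_const, prod_const_one,
    mul_one]

theorem intervalIntegrable_abs_sub_rpow {s : ℝ} (hs : -1 < s) (a r : ℝ) :
    IntervalIntegrable (fun t => |t - r| ^ s) volume a r := by
  rcases le_total a r with h | h
  · have := (intervalIntegral.intervalIntegrable_rpow' (a := r - a) (b := 0) hs).comp_sub_left r
    simp only [sub_sub_cancel, sub_zero] at this
    refine this.congr fun t ht => ?_
    rw [Set.uIoc_of_le h] at ht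
    simp only [abs_of_nonpos (sub_nonpos.mpr ht.2), neg_sub]
  · have := (intervalIntegral.intervalIntegrable_rpow' (a := a - r) (b := 0) hs).comp_sub_right r
    simp only [sub_add_cancel, zero_add] at this
    refine this.congr fun t ht => ?_
    rw [Set.uIoc_of_ge h] at ht
    simp only [abs_of_nonneg (sub_nonneg.mpr ht.1.le)]

theorem intervalIntegrable_mul_prod_abs_sub_rpow {ι : Type*} [Fintype ι] [DecidableEq ι]
    {s : ℝ} (hs : -1 < s) (b : ι → ℝ) (i : ι) {a : ℝ} {f : ℝ → ℝ}
    (hf : ContinuousOn f (Set.uIcc a (b i))) (hb : ∀ k ≠ i, b k ∉ Set.uIcc a (b i)) :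
    IntervalIntegrable (fun t => f t * ∏ k, |t - b k| ^ s) volume a (b i) := by
  have hregular : ContinuousOn (fun t => f t * ∏ k ∈ univ.erase i, |t - b k| ^ s)
      (Set.uIcc a (b i)) := by
    refine hf.mul (continuousOn_finsetProd _ fun k hk => ?_)
    refine ((continuous_abs.comp (continuous_sub_right (b k))).continuousOn).rpow_const
      fun t ht => Or.inl ?_
    exact abs_ne_zero.mpr (sub_ne_zero.mpr fun h => hb k (ne_of_mem_erase hk) (h ▸ ht))
  refine ((intervalIntegrable_abs_sub_rpow hs a (b i)).mul_continuousOn hregular).congr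
    fun t _ => ?_
  simp only [← mul_prod_erase univ (fun k => |t - b k| ^ s) (mem_univ i)]
  ring

theorem ContinuousOn.forall_pos_or_forall_neg {f : ℝ → ℝ} {s : Set ℝ} (hs : IsPreconnected s)
    (hf : ContinuousOn f s) (hne : ∀ t ∈ s, f t ≠ 0) :
    (∀ t ∈ s, 0 < f t) ∨ (∀ t ∈ s, f t < 0) := by
  by_contra! ⟨⟨t₁, ht₁, hf₁⟩, ⟨t₂, ht₂, hf₂⟩⟩
  obtain ⟨t, ht, hzero⟩ := hs.intermediate_value ht₁ ht₂ hf ⟨hf₁, hf₂⟩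
  exact hne t ht hzero

section ConsecutivePoints

variable {m : ℕ} {b : Fin m → ℝ} {i : ℕ}

theorem StrictMono.val_eq_or_eq_succ_of_mem_Icc (hb : StrictMono b) (hi : i + 1 < m) {k : Fin m}
    (hk : b k ∈ Set.Icc (b ⟨i, by omega⟩) (b ⟨i + 1, hi⟩)) : (k : ℕ) = i ∨ (k : ℕ) = i + 1 := by
  have h₁ := hb.le_iff_le.mp hk.1
  have h₂ := hb.le_iff_le.mp hk.2
  simp only [Fin.le_def] at h₁ h₂
  omega

theorem StrictMono.ne_of_mem_Ioo (hb : StrictMono b) (hi : i + 1 < m) {t : ℝ}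
    (ht : t ∈ Set.Ioo (b ⟨i, by omega⟩) (b ⟨i + 1, hi⟩)) (k : Fin m) : b k ≠ t := by
  rintro rfl
  rcases hb.val_eq_or_eq_succ_of_mem_Icc hi (Set.Ioo_subset_Icc_self ht) with h | h
  · exact ht.1.ne (congrArg b (Fin.ext h)).symm
  · exact ht.2.ne (congrArg b (Fin.ext h))

theorem StrictMono.notMem_uIcc_left (hb : StrictMono b) (hi : i + 1 < m) {a : ℝ}
    (ha : a ∈ Set.Ioo (b ⟨i, by omega⟩) (b ⟨i + 1, hi⟩)) {k : Fin m} (hk : k ≠ ⟨i, by omega⟩) :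
    b k ∉ Set.uIcc a (b ⟨i, by omega⟩) := by
  rw [Set.uIcc_of_ge ha.1.le]
  intro hmem
  rcases hb.val_eq_or_eq_succ_of_mem_Icc hi ⟨hmem.1, hmem.2.trans ha.2.le⟩ with h | h
  · exact hk (Fin.ext h)
  · exact (hmem.2.trans_lt ha.2).ne (congrArg b (Fin.ext h))

theorem StrictMono.notMem_uIcc_right (hb : StrictMono b) (hi : i + 1 < m) {a : ℝ}
    (ha : a ∈ Set.Ioo (b ⟨i, by omega⟩) (b ⟨i + 1, hi⟩)) {k : Fin m} (hk : k ≠ ⟨i + 1, hi⟩) :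
    b k ∉ Set.uIcc a (b ⟨i + 1, hi⟩) := by
  rw [Set.uIcc_of_le ha.2.le]
  intro hmem
  rcases hb.val_eq_or_eq_succ_of_mem_Icc hi ⟨ha.1.le.trans hmem.1, hmem.2⟩ with h | h
  · exact (ha.1.trans_le hmem.1).ne' (congrArg b (Fin.ext h))
  · exact hk (Fin.ext h)

theorem StrictMono.card_filter_lt_of_mem_Ioo (hb : StrictMono b) (hi : i + 1 < m) {t : ℝ}
    (ht : t ∈ Set.Ioo (b ⟨i, by omega⟩) (b ⟨i + 1, hi⟩)) : #{k | t < b k} = m - (i + 1) := by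
  have hfilter : ({k | t < b k} : Finset (Fin m)) = Ici ⟨i + 1, hi⟩ := by
    ext k
    simp only [mem_filter, mem_univ, true_and, mem_Ici]
    constructor
    · intro htk
      by_contra! hk
      have hki : b k ≤ b ⟨i, by omega⟩ :=
        hb.monotone (by simp only [Fin.lt_def, Fin.le_def] at hk ⊢; omega)
      exact (hki.trans_lt ht.1).not_gt htk
    · exact fun hk => ht.2.trans_le (hb.monotone hk)
  rw [hfilter, Fin.card_Ici]

theorem StrictMono.neg_prod_sub_eq_prod_abs (hb : StrictMono b) (hi : i + 1 < m)
    (hodd : Odd (m - (i + 1))) {t : ℝ} (ht : t ∈ Set.Icc (b ⟨i, by omega⟩) (b ⟨i + 1, hi⟩)) :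
    -∏ k, (t - b k) = ∏ k, |t - b k| := by
  rcases Set.eq_endpoints_or_mem_Ioo_of_mem_Icc ht with rfl | rfl | ht
  · simp [prod_eq_zero (mem_univ (⟨i, by omega⟩ : Fin m))]
  · simp [prod_eq_zero (mem_univ (⟨i + 1, hi⟩ : Fin m))]
  · rw [prod_sub_eq_neg_one_pow_mul_prod_abs, hb.card_filter_lt_of_mem_Ioo hi ht, hodd.neg_one_pow]
    ring

end ConsecutivePoints

section Gap

variable {n : ℕ}

def gapStart (b : Fin (2 * n + 1) → ℝ) (j : Fin n) : ℝ := b ⟨2 * j + 1, by lia⟩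

def gapEnd (b : Fin (2 * n + 1) → ℝ) (j : Fin n) : ℝ := b ⟨2 * j + 2, by lia⟩

variable {b : Fin (2 * n + 1) → ℝ}

-- At the endpoints both sides vanish, as `0⁻¹ = 0` and `0 ^ (-1/2 : ℝ) = 0`.
theorem inv_gapWeight_eq_prod (hb : StrictMono b) (j : Fin n) {t : ℝ}
    (ht : t ∈ Set.Icc (gapStart b j) (gapEnd b j)) :
    (gapWeight n b t)⁻¹ = ∏ k, |t - b k| ^ (-(1 / 2) : ℝ) := by
  have hodd : Odd (2 * n + 1 - (2 * j + 1 + 1)) := ⟨n - j - 1, by omega⟩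
  rw [gapWeight, hb.neg_prod_sub_eq_prod_abs (i := 2 * j + 1) (by omega) hodd ht,
    Real.sqrt_eq_rpow, ← Real.rpow_neg (prod_nonneg fun k _ => abs_nonneg _),
    Real.finsetProd_rpow _ _ fun k _ => abs_nonneg _]

theorem gapWeight_pos (hb : StrictMono b) (j : Fin n) {t : ℝ}
    (ht : t ∈ Set.Ioo (gapStart b j) (gapEnd b j)) :
    0 < gapWeight n b t := by
  rw [← inv_pos, inv_gapWeight_eq_prod hb j (Set.Ioo_subset_Icc_self ht)]
  exact prod_pos fun k _ => Real.rpow_pos_of_pos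
    (abs_pos.mpr (sub_ne_zero.mpr (hb.ne_of_mem_Ioo (i := 2 * j + 1) (by omega) ht k).symm)) _

theorem intervalIntegrable_div_gapWeight (hb : StrictMono b) (j : Fin n) {f : ℝ → ℝ}
    (hf : Continuous f) {c d : ℝ} (hc : gapStart b j ≤ c) (hcd : c ≤ d) (hd : d ≤ gapEnd b j) :
    IntervalIntegrable (fun t => f t / gapWeight n b t) volume c d := by
  have hlt : gapStart b j < gapEnd b j := hb (by simp [Fin.lt_def])
  have hmid : (gapStart b j + gapEnd b j) / 2 ∈ Set.Ioo (gapStart b j) (gapEnd b j) :=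
    ⟨by linarith, by linarith⟩
  have hhalf : (-1 : ℝ) < -(1 / 2) := by norm_num
  -- near each endpoint, `1/w` is `|t - endpoint|^(-1/2)` times a function continuous there
  have hleft := intervalIntegrable_mul_prod_abs_sub_rpow hhalf b _ hf.continuousOn
    fun k hk => hb.notMem_uIcc_left (i := 2 * j + 1) (by omega) hmid hk
  have hright := intervalIntegrable_mul_prod_abs_sub_rpow hhalf b _ hf.continuousOn
    fun k hk => hb.notMem_uIcc_right (i := 2 * j + 1) (by omega) hmid hk
  have hsub : Set.uIcc c d ⊆ Set.Icc (gapStart b j) (gapEnd b j) := by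
    rw [Set.uIcc_of_le hcd]
    exact Set.Icc_subset_Icc hc hd
  refine ((hleft.symm.trans hright).mono_set (hsub.trans Set.Icc_subset_uIcc)).congr
    fun t ht => ?_
  rw [div_eq_mul_inv (f t), inv_gapWeight_eq_prod hb j (hsub (Set.uIoc_subset_uIcc ht))]

end Gap

section GapIntegral

variable {n : ℕ} {b : Fin (2 * n + 1) → ℝ} {ε : Fin n → ℝ} {G : Fin n → List (ℝ × ℝ)}

theorem gapIntegral_neg (j : Fin n) (f : ℝ → ℝ) :
    gapIntegral n b ε G j (-f) = -gapIntegral n b ε G j f := by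
  have hsum := Multiset.sum_map_neg (m := (G j : Multiset (ℝ × ℝ)))
    (f := fun pr => ∫ t in pr.1..pr.2, f t / gapWeight n b t)
  simp only [Multiset.map_coe, Multiset.sum_coe] at hsum
  simp only [gapIntegral, Pi.neg_apply, neg_div, intervalIntegral.integral_neg, hsum, mul_neg]

theorem gapIntegral_sum_mul {ι : Type*} (j : Fin n) (s : Finset ι) (c : ι → ℝ)
    {f : ι → ℝ → ℝ} (hf : ∀ l ∈ s, ∀ pr ∈ G j,
      IntervalIntegrable (fun t => f l t / gapWeight n b t) volume pr.1 pr.2) :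
    gapIntegral n b ε G j (fun t => ∑ l ∈ s, c l * f l t) =
      ∑ l ∈ s, c l * gapIntegral n b ε G j (f l) := by
  have hlinear : ∀ pr ∈ G j, ∫ t in pr.1..pr.2, (∑ l ∈ s, c l * f l t) / gapWeight n b t =
      ∑ l ∈ s, c l * ∫ t in pr.1..pr.2, f l t / gapWeight n b t := by
    intro pr hpr
    simp_rw [Finset.sum_div, mul_div_assoc]
    rw [intervalIntegral.integral_finsetSum fun l hl => (hf l hl pr hpr).const_mul _]
    simp_rw [intervalIntegral.integral_const_mul]
  have hswap := Multiset.sum_map_sum (m := (G j : Multiset (ℝ × ℝ))) (s := s)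
    (f := fun pr l => c l * ∫ t in pr.1..pr.2, f l t / gapWeight n b t)
  simp only [Multiset.map_coe, Multiset.sum_coe] at hswap
  simp only [gapIntegral, List.map_congr_left hlinear, hswap, List.sum_map_mul_left, mul_sum,
    mul_left_comm (ε j)]

theorem gapIntegral_ne_zero_of_pos (hb : StrictMono b) {j : Fin n} (hε : ε j ≠ 0)
    (hG : ∀ pr ∈ G j, gapStart b j ≤ pr.1 ∧ pr.1 < pr.2 ∧ pr.2 ≤ gapEnd b j)
    (hGne : G j ≠ []) {f : ℝ → ℝ} (hf : Continuous f)
    (hpos : ∀ t ∈ Set.Ioo (gapStart b j) (gapEnd b j), 0 < f t) :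
    gapIntegral n b ε G j f ≠ 0 := by
  refine mul_ne_zero hε (List.sum_pos _ (fun x hx => ?_) (by simpa using hGne)).ne'
  obtain ⟨pr, hpr, rfl⟩ := List.mem_map.mp hx
  obtain ⟨hc, hcd, hd⟩ := hG pr hpr
  refine intervalIntegral.intervalIntegral_pos_of_pos_on
    (intervalIntegrable_div_gapWeight hb j hf hc hcd.le hd)
    (fun t ht => ?_) hcd
  have htgap : t ∈ Set.Ioo (gapStart b j) (gapEnd b j) :=
    ⟨hc.trans_lt ht.1, ht.2.trans_le hd⟩
  exact div_pos (hpos t htgap) (gapWeight_pos hb j htgap)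

theorem exists_eq_zero_of_gapIntegral_eq_zero (hb : StrictMono b) {j : Fin n} (hε : ε j ≠ 0)
    (hG : ∀ pr ∈ G j, gapStart b j ≤ pr.1 ∧ pr.1 < pr.2 ∧ pr.2 ≤ gapEnd b j)
    (hGne : G j ≠ []) {f : ℝ → ℝ} (hf : Continuous f) (hzero : gapIntegral n b ε G j f = 0) :
    ∃ t ∈ Set.Ioo (gapStart b j) (gapEnd b j), f t = 0 := by
  by_contra! hne
  rcases hf.continuousOn.forall_pos_or_forall_neg isPreconnected_Ioo hne with hpos | hneg
  · exact gapIntegral_ne_zero_of_pos hb hε hG hGne hf hpos hzero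
  · refine gapIntegral_ne_zero_of_pos hb hε hG hGne hf.neg (fun t ht => neg_pos.mpr (hneg t ht)) ?_
    rw [gapIntegral_neg, hzero, neg_zero]

end GapIntegral

theorem strictMono_of_mem_gap {n : ℕ} {b : Fin (2 * n + 1) → ℝ} (hb : StrictMono b)
    {r : Fin n → ℝ}
    (hr : ∀ j : Fin n, r j ∈ Set.Ioo (gapStart b j) (gapEnd b j)) :
    StrictMono r := by
  intro j j' hjj'
  have hgaps : gapEnd b j ≤ gapStart b j' :=
    hb.monotone (by simp only [Fin.le_def, Fin.lt_def] at hjj' ⊢; omega)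
  exact ((hr j).2.trans_le hgaps).trans (hr j').1

theorem nondegenerate_period_matrix (n : ℕ)
    (b : Fin (2 * n + 1) → ℝ) (hb : StrictMono b)
    (ε : Fin n → ℝ) (hε : ∀ j, ε j = 1 ∨ ε j = -1)
    (G : Fin n → List (ℝ × ℝ))
    (hG : ∀ j : Fin n, ∀ pr ∈ G j,
      b ⟨2 * (j : ℕ) + 1, by omega⟩ ≤ pr.1 ∧ pr.1 < pr.2 ∧
        pr.2 ≤ b ⟨2 * (j : ℕ) + 2, by omega⟩)
    (hGne : ∀ j : Fin n, G j ≠ []) :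
    IsUnit (Matrix.of fun j l : Fin n =>
      gapIntegral n b ε G j (fun t => t ^ (l : ℕ))) := by
  rw [Matrix.isUnit_iff_isUnit_det, isUnit_iff_ne_zero]
  intro hdet
  obtain ⟨c, hc, hMc⟩ := Matrix.exists_mulVec_eq_zero_iff.mpr hdet
  have hpoly : ∀ j, gapIntegral n b ε G j (fun t => ∑ l, c l * t ^ (l : ℕ)) = 0 := by
    intro j
    have hint : ∀ l : Fin n, ∀ pr ∈ G j, IntervalIntegrable
        (fun t => t ^ (l : ℕ) / gapWeight n b t) volume pr.1 pr.2 := by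
      intro l pr hpr
      obtain ⟨hc, hcd, hd⟩ := hG j pr hpr
      exact intervalIntegrable_div_gapWeight hb j (continuous_pow l) hc hcd.le hd
    rw [gapIntegral_sum_mul j univ c fun l _ => hint l]
    simpa [Matrix.mulVec, dotProduct, mul_comm] using congrFun hMc j
  have hε₀ : ∀ j, ε j ≠ 0 := fun j => by rcases hε j with h | h <;> simp [h]
  choose r hr hroot using fun j => exists_eq_zero_of_gapIntegral_eq_zero hb (hε₀ j) (hG j)
    (hGne j) (by fun_prop) (hpoly j)
  refine hc (Matrix.eq_zero_of_mulVec_eq_zero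
    (Matrix.det_vandermonde_ne_zero_iff.mpr (strictMono_of_mem_gap hb hr).injective) ?_)
  ext j
  simpa [Matrix.mulVec, dotProduct, Matrix.vandermonde, mul_comm] using hroot j
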